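/- arXiv:2603.03626 — 2 statements merged into one kernel-verified Lean document; each statement's English description precedes it below -/
import Mathlib

section
/- Let $\mathcal{S} \subset \mathbb{R}^n$ be nonempty and $f \colon \mathcal{S} \to \mathbb{R}^m$ satisfy $\|f(x_1) - f(x_2)\| \leq L \|x_1 - x_2\|$ for all $x_1, x_2 \in \mathcal{S}$ and $\|f(x)\| \leq K(1 + \|x\|^{1/3})$ for all $x \in \mathcal{S}$, with constants $L, K > 0$. Then there exists $F \colon \mathbb{R}^n \to \mathbb{R}^m$ with $F|_{\mathcal{S}} = f$, $\|F(y_1) - F(y_2)\| \leq (L + 2K)\|y_1 - y_2\|$ for all $y_1, y_2 \in \mathbb{R}^n$, and $\|F(y)\| \leq 2K(1 + \|y\|^{1/3})$ for all $y \in \mathbb{R}^n$. -/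
/-!
Extend `f` to an `L`-Lipschitz map `G` on all of `ℝⁿ` by Kirszbraun's theorem, and let `F y` be
the radial retraction of `G y` onto the ball of radius `r(y) = 2K(1 + min(‖y‖, ‖y‖^{1/3}))`. The
retraction onto a ball is `1`-Lipschitz in the point and in the radius, and `t ↦ min(t, t^{1/3})`
is `1`-Lipschitz, so `F` is `(L + 2K)`-Lipschitz; the growth bound on `f` says that `f x` already
lies in its ball, so `F` still extends `f`.

Kirszbraun's theorem is proved by Zorn's lemma from the one-point extension, and by compactness
that reduces to finitely many balls `closedBall (u i) (L‖y - x i‖)`. For those, minimise the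
largest ratio `‖z - u i‖ / (L‖y - x i‖)`; if the minimum `λ` exceeded `1`, the minimiser would lie
in the convex hull of the points `u i` where the ratio is attained, and averaging
`‖u i - u j‖ ≤ L‖x i - x j‖` over the corresponding convex weights forces `λ ≤ 1`.
-/

open Set Finset Filter Topology RealInnerProductSpace
open scoped NNReal

section Kirszbraun

variable {ι E V : Type*} [NormedAddCommGroup E] [InnerProductSpace ℝ E]
  [NormedAddCommGroup V] [InnerProductSpace ℝ V]

theorem sum_sum_mul_norm_sub_sq (t : Finset ι) {w : ι → ℝ} (hw : ∑ i ∈ t, w i = 1)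
    (a : ι → V) (c : V) :
    ∑ i ∈ t, ∑ j ∈ t, w i * w j * ‖a i - a j‖ ^ 2 =
      2 * ∑ i ∈ t, w i * ‖a i - c‖ ^ 2 - 2 * ‖∑ i ∈ t, w i • a i - c‖ ^ 2 := by
  have hc : ∑ i ∈ t, w i • a i - c = ∑ i ∈ t, w i • (a i - c) := by
    simp only [smul_sub, sum_sub_distrib, ← sum_smul, hw, one_smul]
  have hsq : ‖∑ i ∈ t, w i • (a i - c)‖ ^ 2 =
      ∑ i ∈ t, ∑ j ∈ t, w i * w j * ⟪a i - c, a j - c⟫ := by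
    simp only [← real_inner_self_eq_norm_sq, sum_inner, inner_sum, real_inner_smul_left,
      real_inner_smul_right, mul_assoc]
    exact sum_congr rfl fun i _ => sum_congr rfl fun j _ => by rw [real_inner_comm]
  have hsplit : ∀ i j, ‖a i - a j‖ ^ 2 =
      ‖a i - c‖ ^ 2 - 2 * ⟪a i - c, a j - c⟫ + ‖a j - c‖ ^ 2 := fun i j => by
    rw [← norm_sub_sq_real, sub_sub_sub_cancel_right]
  have hswap : ∑ i ∈ t, ∑ j ∈ t, w i * w j * ‖a j - c‖ ^ 2 = ∑ j ∈ t, w j * ‖a j - c‖ ^ 2 := by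
    rw [sum_comm]
    simp only [mul_assoc, ← sum_mul, hw, one_mul]
  simp only [hc, hsq, hsplit, mul_add, mul_sub, sum_add_distrib, sum_sub_distrib, ← sum_mul,
    ← mul_sum, hw, hswap, mul_one, mul_left_comm _ (2 : ℝ)]
  ring

theorem exists_norm_sub_le_of_mem_convexHull {x : ι → E} {u : ι → V} {L : ℝ} (hL : 0 ≤ L)
    (hu : ∀ i j, ‖u i - u j‖ ≤ L * ‖x i - x j‖) (y : E) {z : V}
    (hz : z ∈ convexHull ℝ (range u)) : ∃ i, ‖z - u i‖ ≤ L * ‖y - x i‖ := by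
  rw [convexHull_range_eq_exists_affineCombination] at hz
  obtain ⟨t, w, hw0, hw1, rfl⟩ := hz
  rw [t.affineCombination_eq_linear_combination u w hw1]
  set z := ∑ i ∈ t, w i • u i
  have hpair : ∑ i ∈ t, ∑ j ∈ t, w i * w j * ‖u i - u j‖ ^ 2 ≤
      L ^ 2 * ∑ i ∈ t, ∑ j ∈ t, w i * w j * ‖x i - x j‖ ^ 2 := by
    simp only [mul_sum]
    refine sum_le_sum fun i hi => sum_le_sum fun j hj => ?_
    rw [mul_left_comm, ← mul_pow]
    exact mul_le_mul_of_nonneg_left (pow_le_pow_left₀ (norm_nonneg _) (hu i j) 2)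
      (mul_nonneg (hw0 i hi) (hw0 j hj))
  have hmean : ∑ i ∈ t, w i * ‖z - u i‖ ^ 2 ≤ L ^ 2 * ∑ i ∈ t, w i * ‖y - x i‖ ^ 2 := by
    rw [sum_sum_mul_norm_sub_sq t hw1 u z, sum_sum_mul_norm_sub_sq t hw1 x y, sub_self,
      norm_zero] at hpair
    simp only [norm_sub_rev z, norm_sub_rev y]
    nlinarith [sq_nonneg ‖∑ i ∈ t, w i • x i - y‖]
  by_contra! hfar
  obtain ⟨i₀, hi₀, hwi₀⟩ : ∃ i ∈ t, 0 < w i := exists_lt_of_sum_lt (by simp [hw1])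
  have hsq : ∀ i, (L * ‖y - x i‖) ^ 2 < ‖z - u i‖ ^ 2 := fun i =>
    pow_lt_pow_left₀ (hfar i) (by positivity) two_ne_zero
  refine hmean.not_gt ?_
  rw [mul_sum]
  refine sum_lt_sum (fun i hi => ?_) ⟨i₀, hi₀, ?_⟩
  · rw [mul_left_comm, ← mul_pow]
    exact mul_le_mul_of_nonneg_left (hsq i).le (hw0 i hi)
  · rw [mul_left_comm, ← mul_pow]
    exact mul_lt_mul_of_pos_left (hsq i₀) hwi₀

theorem exists_inner_pos_of_notMem_convexHull [CompleteSpace V] {s : Set V} (hs : s.Finite)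
    {z : V} (hz : z ∉ convexHull ℝ s) : ∃ v, ∀ a ∈ s, 0 < ⟪v, a - z⟫ := by
  obtain ⟨f, c, hfz, hf⟩ := geometric_hahn_banach_point_closed (convex_convexHull ℝ s)
    (hs.isCompact_convexHull (𝕜 := ℝ)).isClosed hz
  refine ⟨(InnerProductSpace.toDual ℝ V).symm f, fun a ha => ?_⟩
  rw [InnerProductSpace.toDual_symm_apply, map_sub, sub_pos]
  exact hfz.trans (hf a (subset_convexHull ℝ s ha))

theorem eventually_norm_add_smul_sub_lt {z a v : V} (h : 0 < ⟪v, a - z⟫) :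
    ∀ᶠ t in 𝓝[>] (0 : ℝ), ‖z + t • v - a‖ < ‖z - a‖ := by
  have hv : 0 < ‖v‖ ^ 2 := by
    have : v ≠ 0 := by rintro rfl; simp at h
    positivity
  filter_upwards [Ioo_mem_nhdsGT (div_pos (mul_pos two_pos h) hv)] with t ⟨ht0, ht⟩
  rw [lt_div_iff₀ hv] at ht
  have hza : ⟪z - a, v⟫ = -⟪v, a - z⟫ := by rw [real_inner_comm, ← inner_neg_right, neg_sub]
  rw [← sq_lt_sq₀ (norm_nonneg _) (norm_nonneg _), add_sub_right_comm, norm_add_sq_real,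
    real_inner_smul_right, norm_smul, mul_pow, Real.norm_eq_abs, sq_abs, hza]
  nlinarith

/-- Otherwise, moving `z` slightly in a direction separating it from that convex hull would bring it
into every open ball `ball (c i) (R i)`, which `hmin` rules out. -/
theorem mem_convexHull_of_forall_exists_le [CompleteSpace V] {s : Finset ι} {c : ι → V}
    {R : ι → ℝ} {z : V} (hz : ∀ i ∈ s, ‖z - c i‖ ≤ R i)
    (hmin : ∀ z', ∃ i ∈ s, R i ≤ ‖z' - c i‖) :
    z ∈ convexHull ℝ (c '' {i | i ∈ s ∧ ‖z - c i‖ = R i}) := by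
  by_contra hzA
  obtain ⟨v, hv⟩ := exists_inner_pos_of_notMem_convexHull
    ((s.finite_toSet.subset fun _ hi => hi.1).image c) hzA
  have hdesc : ∀ᶠ t in 𝓝[>] (0 : ℝ), ∀ i ∈ s, ‖z + t • v - c i‖ < R i := by
    refine (eventually_all_finset s).2 fun i hi => ?_
    rcases (hz i hi).eq_or_lt with heq | hlt
    · rw [← heq]
      exact eventually_norm_add_smul_sub_lt (hv _ (mem_image_of_mem c ⟨hi, heq⟩))
    · refine Tendsto.eventually_lt_const hlt (tendsto_nhdsWithin_of_tendsto_nhds ?_)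
      have hcont : Continuous fun t : ℝ => ‖z + t • v - c i‖ := by fun_prop
      simpa using hcont.tendsto 0
  obtain ⟨t, ht⟩ := hdesc.exists
  obtain ⟨i, hi, hle⟩ := hmin (z + t • v)
  exact (ht i hi).not_ge hle

theorem exists_forall_norm_sub_le_of_finset [FiniteDimensional ℝ V] {s : Finset ι} {x : ι → E}
    {u : ι → V} {L : ℝ} (hL : 0 < L) (hu : ∀ i ∈ s, ∀ j ∈ s, ‖u i - u j‖ ≤ L * ‖x i - x j‖)
    (y : E) : ∃ z, ∀ i ∈ s, ‖z - u i‖ ≤ L * ‖y - x i‖ := by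
  by_cases hy : ∃ i ∈ s, x i = y
  · obtain ⟨i₀, hi₀, rfl⟩ := hy
    exact ⟨u i₀, hu i₀ hi₀⟩
  push Not at hy
  rcases s.eq_empty_or_nonempty with rfl | hs
  · simp
  set ρ : ι → ℝ := fun i => L * ‖y - x i‖
  have hρ : ∀ i ∈ s, 0 < ρ i := fun i hi =>
    mul_pos hL (norm_pos_iff.2 (sub_ne_zero.2 (hy i hi).symm))
  set φ : V → ℝ := fun z => s.sup' hs fun i => ‖z - u i‖ / ρ i
  have hφ : ∀ z, ∀ i ∈ s, ‖z - u i‖ / ρ i ≤ φ z := fun z i hi =>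
    le_sup' (fun i => ‖z - u i‖ / ρ i) hi
  obtain ⟨i₀, hi₀⟩ := hs
  have hcoercive : Tendsto φ (cocompact V) atTop := by
    refine tendsto_atTop_mono (fun z => (div_le_div_of_nonneg_right (norm_sub_norm_le z (u i₀))
      (hρ i₀ hi₀).le).trans (hφ z i₀ hi₀)) (Tendsto.atTop_div_const (hρ i₀ hi₀) ?_)
    simpa only [sub_eq_add_neg] using
      tendsto_atTop_add_const_right _ (-‖u i₀‖) tendsto_norm_cocompact_atTop
  obtain ⟨z, hz⟩ : ∃ z, ∀ z', φ z ≤ φ z' := (Continuous.finset_sup'_apply _ fun i _ =>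
    (continuous_id.sub continuous_const).norm.div_const (ρ i)).exists_forall_le hcoercive
  refine ⟨z, fun i hi => (div_le_one (hρ i hi)).1 ((hφ z i hi).trans ?_)⟩
  by_contra! hφz
  have hmin : ∀ z', ∃ i ∈ s, φ z * ρ i ≤ ‖z' - u i‖ := fun z' => by
    obtain ⟨i, hi, hi'⟩ := exists_mem_eq_sup' ⟨i₀, hi₀⟩ fun i => ‖z' - u i‖ / ρ i
    exact ⟨i, hi, (le_div_iff₀ (hρ i hi)).1 (hi' ▸ hz z')⟩
  have hhull := mem_convexHull_of_forall_exists_le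
    (fun i hi => (div_le_iff₀ (hρ i hi)).1 (hφ z i hi)) hmin
  set A : Set ι := {i | i ∈ s ∧ ‖z - u i‖ = φ z * ρ i}
  rw [image_eq_range] at hhull
  obtain ⟨⟨i, hi, hiR⟩, hi'⟩ := exists_norm_sub_le_of_mem_convexHull (x := fun i : A => x i) hL.le
    (fun i j => hu i i.2.1 j j.2.1) y hhull
  have : φ z * ρ i ≤ 1 * ρ i := by rw [one_mul, ← hiR]; exact hi'
  exact hφz.not_ge (le_of_mul_le_mul_right this (hρ i hi))

theorem exists_forall_norm_sub_le [FiniteDimensional ℝ V] {s : Set ι} {x : ι → E} {u : ι → V}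
    {L : ℝ} (hL : 0 < L) (hu : ∀ i ∈ s, ∀ j ∈ s, ‖u i - u j‖ ≤ L * ‖x i - x j‖) (y : E) :
    ∃ z, ∀ i ∈ s, ‖z - u i‖ ≤ L * ‖y - x i‖ := by
  classical
  rcases s.eq_empty_or_nonempty with rfl | ⟨i₀, hi₀⟩
  · simp
  obtain ⟨z, -, hz⟩ := (isCompact_closedBall (u i₀) (L * ‖y - x i₀‖)).inter_iInter_nonempty
    (fun i : s => Metric.closedBall (u i) (L * ‖y - x i‖)) (fun _ => Metric.isClosed_closedBall)
    fun t => by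
      obtain ⟨z, hz⟩ := exists_forall_norm_sub_le_of_finset (s := insert ⟨i₀, hi₀⟩ t)
        (x := fun i : s => x i) (u := fun i : s => u i) hL (fun i _ j _ => hu i i.2 j j.2) y
      refine ⟨z, ?_, mem_iInter₂.2 fun i hi => ?_⟩
      · simpa [dist_eq_norm] using hz _ (mem_insert_self _ _)
      · simpa [dist_eq_norm] using hz i (mem_insert_of_mem hi)
  exact ⟨z, fun i hi => by simpa [dist_eq_norm] using mem_iInter.1 hz ⟨i, hi⟩⟩

theorem LipschitzOnWith.kirszbraun [FiniteDimensional ℝ V] {K : ℝ≥0} (hK : 0 < K) {f : E → V}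
    {s : Set E} (hf : LipschitzOnWith K f s) : ∃ g : E → V, LipschitzWith K g ∧ EqOn f g s := by
  -- Zorn's lemma runs over graphs of `K`-Lipschitz partial maps.
  set R : E × V → E × V → Prop := fun p q => ‖p.2 - q.2‖ ≤ K * ‖p.1 - q.1‖
  have hR : ∀ {Γ : Set (E × V)}, Γ.Pairwise R → ∀ p ∈ Γ, ∀ q ∈ Γ, R p q :=
    fun hΓ p hp q hq => by
      rcases eq_or_ne p q with rfl | hpq
      · simp [R]
      · exact hΓ hp hq hpq
  obtain ⟨Γ, hfΓ, hΓ, hmax⟩ := zorn_subset_nonempty {Γ : Set (E × V) | Γ.Pairwise R}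
    (fun c hc hchain _ =>
      ⟨⋃₀ c, (pairwise_sUnion hchain.directedOn).2 hc, fun _ => subset_sUnion_of_mem⟩)
    ((fun a => (a, f a)) '' s) (by
      rintro - ⟨a, ha, rfl⟩ - ⟨b, hb, rfl⟩ -
      exact lipschitzOnWith_iff_norm_sub_le.1 hf ha hb)
  have hdom : ∀ y, ∃ v, (y, v) ∈ Γ := by
    intro y
    by_contra! hy
    obtain ⟨z, hz⟩ := exists_forall_norm_sub_le (x := Prod.fst) (u := Prod.snd)
      (by exact_mod_cast hK) (hR hΓ) y
    have hins : (insert (y, z) Γ).Pairwise R := pairwise_insert.2 ⟨hΓ, fun q hq _ =>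
      ⟨hz q hq, by simpa only [R, norm_sub_rev] using hz q hq⟩⟩
    exact hy z (hmax hins (subset_insert _ _) (mem_insert _ _))
  choose g hg using hdom
  refine ⟨g, lipschitzWith_iff_norm_sub_le.2 fun a b => hR hΓ _ (hg a) _ (hg b), fun a ha => ?_⟩
  simpa [R, sub_eq_zero] using hR hΓ _ (hfΓ ⟨a, ha, rfl⟩) _ (hg a)

end Kirszbraun

section RadialRetraction

variable {V : Type*} [NormedAddCommGroup V] [InnerProductSpace ℝ V]

/-- The nearest-point retraction of `V` onto `closedBall 0 r`, for `0 ≤ r`. At `v = 0` the factor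
is the junk value `r / 0 = 0`, which gives the right answer. -/
noncomputable def radialRetraction (r : ℝ) (v : V) : V := (min r ‖v‖ / ‖v‖) • v

theorem radialRetraction_of_norm_le {r : ℝ} {v : V} (h : ‖v‖ ≤ r) : radialRetraction r v = v := by
  rcases eq_or_ne v 0 with rfl | hv
  · simp [radialRetraction]
  · rw [radialRetraction, min_eq_right h, div_self (norm_ne_zero_iff.2 hv), one_smul]

theorem norm_radialRetraction {r : ℝ} (hr : 0 ≤ r) (v : V) :
    ‖radialRetraction r v‖ = min r ‖v‖ := by
  rcases eq_or_ne v 0 with rfl | hv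
  · simp [radialRetraction, hr]
  · rw [radialRetraction, norm_smul, Real.norm_eq_abs, abs_of_nonneg (by positivity),
      div_mul_cancel₀ _ (norm_ne_zero_iff.2 hv)]

theorem inner_sub_radialRetraction_nonpos {r : ℝ} (v : V) {w : V} (hw : ‖w‖ ≤ r) :
    ⟪v - radialRetraction r v, w - radialRetraction r v⟫ ≤ 0 := by
  rcases le_or_gt ‖v‖ r with hv | hv
  · simp [radialRetraction_of_norm_le hv]
  have hv0 : 0 < ‖v‖ := (norm_nonneg w).trans_lt (hw.trans_lt hv)
  have hc : min r ‖v‖ / ‖v‖ * ‖v‖ = r := by rw [min_eq_left hv.le, div_mul_cancel₀ _ hv0.ne']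
  have hc1 : min r ‖v‖ / ‖v‖ ≤ 1 := div_le_one_of_le₀ (min_le_right _ _) hv0.le
  set c := min r ‖v‖ / ‖v‖
  have hvw : ⟪v, w⟫ ≤ ‖v‖ * r := (real_inner_le_norm v w).trans (by gcongr)
  have hsub : v - c • v = (1 - c) • v := by rw [sub_smul, one_smul]
  rw [radialRetraction, hsub, real_inner_smul_left, inner_sub_right, real_inner_smul_right,
    real_inner_self_eq_norm_sq]
  exact mul_nonpos_of_nonneg_of_nonpos (sub_nonneg.2 hc1) (by nlinarith)

/-- Nearest-point projections onto convex sets are `1`-Lipschitz because of this inequality, applied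
to their variational characterisation. -/
theorem norm_sub_le_of_inner_nonpos {u v p q : V} (hp : ⟪u - p, q - p⟫ ≤ 0)
    (hq : ⟪v - q, p - q⟫ ≤ 0) : ‖p - q‖ ≤ ‖u - v‖ := by
  have hpq : ‖p - q‖ ^ 2 ≤ ⟪u - v, p - q⟫ := by
    have hsum : ⟪u - v, p - q⟫ = ⟪p - q, p - q⟫ - ⟪u - p, q - p⟫ - ⟪v - q, p - q⟫ := by
      simp only [inner_sub_left, inner_sub_right, real_inner_comm]
      ring
    rw [hsum, real_inner_self_eq_norm_sq]
    linarith
  rcases (norm_nonneg (p - q)).eq_or_lt with h | h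
  · rw [← h]; exact norm_nonneg _
  · nlinarith [real_inner_le_norm (u - v) (p - q)]

theorem norm_radialRetraction_sub_radialRetraction_le {r : ℝ} (hr : 0 ≤ r) (u v : V) :
    ‖radialRetraction r u - radialRetraction r v‖ ≤ ‖u - v‖ := by
  have hball : ∀ w : V, ‖radialRetraction r w‖ ≤ r := fun w =>
    (norm_radialRetraction hr w).trans_le (min_le_left _ _)
  exact norm_sub_le_of_inner_nonpos (inner_sub_radialRetraction_nonpos u (hball v))
    (inner_sub_radialRetraction_nonpos v (hball u))

theorem norm_radialRetraction_sub_radialRetraction_radius_le (r r' : ℝ) (v : V) :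
    ‖radialRetraction r v - radialRetraction r' v‖ ≤ |r - r'| := by
  rcases eq_or_ne v 0 with rfl | hv
  · simp [radialRetraction]
  have hv0 : ‖v‖ ≠ 0 := norm_ne_zero_iff.2 hv
  rw [radialRetraction, radialRetraction, ← sub_smul, ← sub_div, norm_smul, norm_div,
    Real.norm_eq_abs, norm_norm, div_mul_cancel₀ _ hv0]
  simpa using abs_min_sub_min_le_max r ‖v‖ r' ‖v‖

theorem norm_radialRetraction_sub_le {r r' : ℝ} (hr : 0 ≤ r) (u v : V) :
    ‖radialRetraction r u - radialRetraction r' v‖ ≤ ‖u - v‖ + |r - r'| := by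
  rw [← sub_add_sub_cancel _ (radialRetraction r v)]
  exact (norm_add_le _ _).trans (add_le_add (norm_radialRetraction_sub_radialRetraction_le hr u v)
    (norm_radialRetraction_sub_radialRetraction_radius_le r r' v))

end RadialRetraction

section MinCbrt

noncomputable def minCbrt (t : ℝ) : ℝ := min t (t ^ ((1 : ℝ) / 3))

theorem minCbrt_nonneg {t : ℝ} (ht : 0 ≤ t) : 0 ≤ minCbrt t :=
  le_min ht (Real.rpow_nonneg ht _)

theorem minCbrt_eq_self {t : ℝ} (ht : 0 ≤ t) (h1 : t ≤ 1) : minCbrt t = t :=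
  min_eq_left (Real.self_le_rpow_of_le_one ht h1 (by norm_num))

theorem minCbrt_eq_rpow {t : ℝ} (h1 : 1 ≤ t) : minCbrt t = t ^ ((1 : ℝ) / 3) :=
  min_eq_right (Real.rpow_le_self_of_one_le h1 (by norm_num))

theorem rpow_le_one_add_minCbrt {t : ℝ} (ht : 0 ≤ t) : t ^ ((1 : ℝ) / 3) ≤ 1 + minCbrt t := by
  rcases le_total t 1 with h1 | h1
  · linarith [Real.rpow_le_one ht h1 (by norm_num : (0 : ℝ) ≤ 1 / 3), minCbrt_nonneg ht]
  · rw [minCbrt_eq_rpow h1]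
    linarith

theorem rpow_one_third_sub_rpow_one_third_le {s t : ℝ} (hs : 1 ≤ s) (hst : s ≤ t) :
    t ^ ((1 : ℝ) / 3) - s ^ ((1 : ℝ) / 3) ≤ t - s := by
  have hcube : ∀ {x : ℝ}, 0 ≤ x → (x ^ ((1 : ℝ) / 3)) ^ 3 = x := fun hx => by
    simpa using Real.rpow_inv_natCast_pow (n := 3) hx three_ne_zero
  set a := s ^ ((1 : ℝ) / 3)
  set b := t ^ ((1 : ℝ) / 3)
  have ha : 1 ≤ a := Real.one_le_rpow hs (by norm_num)
  have hab : a ≤ b := Real.rpow_le_rpow (by linarith) hst (by norm_num)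
  rw [← hcube (zero_le_one.trans hs), ← hcube (by linarith : (0 : ℝ) ≤ t)]
  -- `b³ - a³ = (b - a)(a² + ab + b²)` and `a² + ab + b² ≥ 1`
  nlinarith [mul_nonneg (sub_nonneg.2 hab) (by nlinarith : (0 : ℝ) ≤ a ^ 2 + a * b + b ^ 2 - 1)]

theorem abs_minCbrt_sub_minCbrt_le {s t : ℝ} (hs : 0 ≤ s) (ht : 0 ≤ t) :
    |minCbrt s - minCbrt t| ≤ |s - t| := by
  wlog hst : s ≤ t generalizing s t
  · rw [abs_sub_comm, abs_sub_comm s]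
    exact this ht hs (le_of_not_ge hst)
  have hmono : minCbrt s ≤ minCbrt t :=
    min_le_min hst (Real.rpow_le_rpow hs hst (by norm_num))
  rw [abs_sub_comm, abs_sub_comm s, abs_of_nonneg (sub_nonneg.2 hmono),
    abs_of_nonneg (sub_nonneg.2 hst)]
  rcases le_total s 1 with h1 | h1
  · rw [minCbrt_eq_self hs h1]
    linarith [show minCbrt t ≤ t from min_le_left _ _]
  · rw [minCbrt_eq_rpow h1, minCbrt_eq_rpow (h1.trans hst)]
    exact rpow_one_third_sub_rpow_one_third_le h1 hst

end MinCbrt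

theorem stmt_4_general (n m : ℕ) (S : Set (EuclideanSpace ℝ (Fin n)))
    (f : EuclideanSpace ℝ (Fin n) → EuclideanSpace ℝ (Fin m)) (L K : ℝ)
    (hL : 0 < L) (hK : 0 < K)
    (hlip : ∀ x₁ ∈ S, ∀ x₂ ∈ S, ‖f x₁ - f x₂‖ ≤ L * ‖x₁ - x₂‖)
    (hgrow : ∀ x ∈ S, ‖f x‖ ≤ K * (1 + ‖x‖ ^ ((1:ℝ)/3))) :
    ∃ F : EuclideanSpace ℝ (Fin n) → EuclideanSpace ℝ (Fin m),
      (∀ x ∈ S, F x = f x) ∧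
      (∀ y₁ y₂, ‖F y₁ - F y₂‖ ≤ (L + 2*K) * ‖y₁ - y₂‖) ∧
      (∀ y, ‖F y‖ ≤ 2*K*(1 + ‖y‖ ^ ((1:ℝ)/3))) := by
  lift L to ℝ≥0 using hL.le
  obtain ⟨G, hG, hfG⟩ :=
    (lipschitzOnWith_iff_norm_sub_le.2 hlip).kirszbraun (by exact_mod_cast hL)
  set r : EuclideanSpace ℝ (Fin n) → ℝ := fun y => 2 * K * (1 + minCbrt ‖y‖)
  have hr : ∀ y, 0 ≤ r y := fun y => by have := minCbrt_nonneg (norm_nonneg y); positivity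
  refine ⟨fun y => radialRetraction (r y) (G y), fun x hx => ?_, fun y₁ y₂ => ?_, fun y => ?_⟩
  · show radialRetraction (r x) (G x) = f x
    rw [← hfG hx]
    refine radialRetraction_of_norm_le ((hgrow x hx).trans ?_)
    nlinarith [rpow_le_one_add_minCbrt (norm_nonneg x), minCbrt_nonneg (norm_nonneg x)]
  · have hrlip : |r y₁ - r y₂| ≤ 2 * K * ‖y₁ - y₂‖ := by
      rw [show r y₁ - r y₂ = 2 * K * (minCbrt ‖y₁‖ - minCbrt ‖y₂‖) by ring, abs_mul,
        abs_of_pos (by positivity)]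
      exact mul_le_mul_of_nonneg_left ((abs_minCbrt_sub_minCbrt_le (norm_nonneg _)
        (norm_nonneg _)).trans (abs_norm_sub_norm_le y₁ y₂)) (by positivity)
    calc ‖radialRetraction (r y₁) (G y₁) - radialRetraction (r y₂) (G y₂)‖
        ≤ ‖G y₁ - G y₂‖ + |r y₁ - r y₂| := norm_radialRetraction_sub_le (hr y₁) _ _
      _ ≤ L * ‖y₁ - y₂‖ + 2 * K * ‖y₁ - y₂‖ :=
        add_le_add (lipschitzWith_iff_norm_sub_le.1 hG y₁ y₂) hrlip
      _ = (L + 2 * K) * ‖y₁ - y₂‖ := by ring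
  · rw [norm_radialRetraction (hr y)]
    refine (min_le_left _ _).trans ?_
    show 2 * K * (1 + minCbrt ‖y‖) ≤ _
    gcongr
    exact min_le_right _ _

/-- Lipschitz extension with sub-linear growth: a map `f` on a nonempty `S ⊆ ℝⁿ` that is
`L`-Lipschitz and satisfies `‖f(x)‖ ≤ K(1 + ‖x‖^{1/3})` extends to `F : ℝⁿ → ℝᵐ` which is
`(L + 2K)`-Lipschitz and satisfies `‖F(y)‖ ≤ 2K(1 + ‖y‖^{1/3})`. -/
theorem stmt_4 (n m : ℕ) (S : Set (EuclideanSpace ℝ (Fin n))) (hS : S.Nonempty)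
    (f : EuclideanSpace ℝ (Fin n) → EuclideanSpace ℝ (Fin m)) (L K : ℝ)
    (hL : 0 < L) (hK : 0 < K)
    (hlip : ∀ x₁ ∈ S, ∀ x₂ ∈ S, ‖f x₁ - f x₂‖ ≤ L * ‖x₁ - x₂‖)
    (hgrow : ∀ x ∈ S, ‖f x‖ ≤ K * (1 + ‖x‖ ^ ((1:ℝ)/3))) :
    ∃ F : EuclideanSpace ℝ (Fin n) → EuclideanSpace ℝ (Fin m),
      (∀ x ∈ S, F x = f x) ∧
      (∀ y₁ y₂, ‖F y₁ - F y₂‖ ≤ (L + 2*K) * ‖y₁ - y₂‖) ∧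
      (∀ y, ‖F y‖ ≤ 2*K*(1 + ‖y‖ ^ ((1:ℝ)/3))) :=
  stmt_4_general n m S f L K hL hK hlip hgrow
end

section
/- Let $F \colon \mathbb{R}^n \to \mathbb{R}^k$ ($k < n$) be smooth, $\mathcal{M} = F^{-1}(0)$, and assume $\mathrm{rank}\, DF(x) = k$ for all $x \in \mathcal{M}$, $c_0 := \inf_{x \in \mathcal{M}} \sigma_{\min}(DF(x)) > 0$, and $C_2 := \sup_{y \in \mathcal{V}} \|D^2 F(y)\|_{\mathrm{op}} < \infty$ for some open convex neighborhood $\mathcal{V}$ of $\mathcal{M}$. Then the reach of $\mathcal{M}$ is at least $c_0 / C_2$: every point $y \in \mathbb{R}^n$ with $d(y, \mathcal{M}) < c_0/C_2$ has a unique nearest point in $\mathcal{M}$. In particular $\mathcal{M}$ admits a uniform tubular neighborhood. -/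
open Metric Set intervalIntegral in

lemma taylor_aux {n k : ℕ} {F : EuclideanSpace ℝ (Fin n) → EuclideanSpace ℝ (Fin k)}
    (hF : ContDiff ℝ (⊤ : ℕ∞) F) {V : Set (EuclideanSpace ℝ (Fin n))} (hVconv : Convex ℝ V)
    {C₂ : ℝ} (hC₂ : 0 ≤ C₂) (hD2 : ∀ y ∈ V, ‖iteratedFDeriv ℝ 2 F y‖ ≤ C₂)
    {p q : EuclideanSpace ℝ (Fin n)} (hp : p ∈ V) (hq : q ∈ V) :
    ‖F q - F p - fderiv ℝ F p (q - p)‖ ≤ C₂ / 2 * ‖q - p‖ ^ 2 := by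
  set v := q - p with hv
  -- Lipschitz bound for the derivative on V
  have hlip : ∀ x ∈ V, ‖fderiv ℝ F x - fderiv ℝ F p‖ ≤ C₂ * ‖x - p‖ := by
    intro x hx
    have hdiff : ∀ z ∈ V, DifferentiableAt ℝ (fderiv ℝ F) z := fun z _ =>
      ((hF.fderiv_right (m := 1) (WithTop.coe_le_coe.2 le_top)).differentiable one_ne_zero).differentiableAt
    have hbound : ∀ z ∈ V, ‖fderiv ℝ (fderiv ℝ F) z‖ ≤ C₂ := by
      intro z hz
      have h0 : ‖fderiv ℝ (fderiv ℝ F) z‖ = ‖iteratedFDeriv ℝ 0 (fderiv ℝ (fderiv ℝ F)) z‖ :=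
        by rw [norm_iteratedFDeriv_zero]
      rw [h0, norm_iteratedFDeriv_fderiv, norm_iteratedFDeriv_fderiv]
      exact hD2 z hz
    exact hVconv.norm_image_sub_le_of_norm_fderiv_le hdiff hbound hp hx
  -- curve and its derivative
  have hmemV : ∀ t ∈ Set.Icc (0:ℝ) 1, p + t • v ∈ V := fun t ht =>
    hVconv.add_smul_sub_mem hp hq ht
  have hderiv : ∀ t : ℝ, HasDerivAt (fun s : ℝ => F (p + s • v))
      (fderiv ℝ F (p + t • v) v) t := by
    intro t
    have h1 : HasDerivAt (fun s : ℝ => p + s • v) v t := by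
      simpa using ((hasDerivAt_id t).smul_const v).const_add p
    have h2 : HasFDerivAt F (fderiv ℝ F (p + t • v)) (p + t • v) :=
      (hF.differentiable (by simp) (p + t • v)).hasFDerivAt
    exact h2.comp_hasDerivAt t h1
  have hcont : Continuous fun t : ℝ => fderiv ℝ F (p + t • v) v := by
    exact ((hF.continuous_fderiv (by simp)).comp (by continuity)).clm_apply continuous_const
  have hint : IntervalIntegrable (fun t : ℝ => fderiv ℝ F (p + t • v) v)
      MeasureTheory.volume 0 1 := hcont.intervalIntegrable 0 1
  have heq : ∫ t in (0:ℝ)..1, fderiv ℝ F (p + t • v) v = F q - F p := by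
    have := intervalIntegral.integral_eq_sub_of_hasDerivAt
      (f := fun s : ℝ => F (p + s • v)) (fun t _ => hderiv t) hint
    simpa [hv] using this
  have heq2 : F q - F p - fderiv ℝ F p v
      = ∫ t in (0:ℝ)..1, (fderiv ℝ F (p + t • v) v - fderiv ℝ F p v) := by
    rw [intervalIntegral.integral_sub hint (intervalIntegrable_const), heq]
    simp
  rw [heq2]
  have hbnd : ∀ t ∈ Set.Ioc (0:ℝ) 1,
      ‖fderiv ℝ F (p + t • v) v - fderiv ℝ F p v‖ ≤ (C₂ * ‖v‖ ^ 2) * t := by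
    intro t ht
    have htI : t ∈ Set.Icc (0:ℝ) 1 := ⟨le_of_lt ht.1, ht.2⟩
    have h1 : ‖fderiv ℝ F (p + t • v) v - fderiv ℝ F p v‖
        ≤ ‖fderiv ℝ F (p + t • v) - fderiv ℝ F p‖ * ‖v‖ := by
      have := (fderiv ℝ F (p + t • v) - fderiv ℝ F p).le_opNorm v
      simpa using this
    have h2 : ‖fderiv ℝ F (p + t • v) - fderiv ℝ F p‖ ≤ C₂ * (t * ‖v‖) := by
      have := hlip (p + t • v) (hmemV t htI)
      simpa [norm_smul, abs_of_nonneg ht.1.le] using this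
    calc ‖fderiv ℝ F (p + t • v) v - fderiv ℝ F p v‖
        ≤ (C₂ * (t * ‖v‖)) * ‖v‖ := h1.trans (by
          exact mul_le_mul_of_nonneg_right h2 (norm_nonneg v))
      _ = (C₂ * ‖v‖ ^ 2) * t := by ring
  have hIbound : IntervalIntegrable (fun t : ℝ => (C₂ * ‖v‖ ^ 2) * t)
      MeasureTheory.volume 0 1 := (continuous_const.mul continuous_id).intervalIntegrable 0 1
  have hnorm := intervalIntegral.norm_integral_le_abs_of_norm_le
    (f := fun t : ℝ => fderiv ℝ F (p + t • v) v - fderiv ℝ F p v)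
    (g := fun t : ℝ => (C₂ * ‖v‖ ^ 2) * t) (μ := MeasureTheory.volume) (a := 0) (b := 1)
    ?_ hIbound
  · refine hnorm.trans ?_
    have hval : ∫ t in (0:ℝ)..1, (C₂ * ‖v‖ ^ 2) * t = C₂ / 2 * ‖v‖ ^ 2 := by
      rw [intervalIntegral.integral_const_mul, integral_id]
      ring
    rw [hval, abs_of_nonneg (by positivity)]
  · rw [MeasureTheory.ae_restrict_iff' measurableSet_uIoc]
    refine MeasureTheory.ae_of_all _ fun t ht => ?_
    have : t ∈ Set.Ioc (0:ℝ) 1 := by rwa [Set.uIoc_of_le (by norm_num : (0:ℝ) ≤ 1)] at ht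
    exact hbnd t this


lemma orth_aux {n k : ℕ} {F : EuclideanSpace ℝ (Fin n) → EuclideanSpace ℝ (Fin k)}
    (hF : ContDiff ℝ (⊤ : ℕ∞) F) {M : Set (EuclideanSpace ℝ (Fin n))} (hM : M = F ⁻¹' {0})
    {p y : EuclideanSpace ℝ (Fin n)} (hp : p ∈ M)
    (hrange : LinearMap.range (fderiv ℝ F p).toLinearMap = ⊤)
    (hd : ‖y - p‖ = Metric.infDist y M) :
    y - p ∈ (LinearMap.ker (fderiv ℝ F p).toLinearMap)ᗮ := by
  have hFp : F p = 0 := by rw [hM] at hp; simpa using hp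
  set f' := fderiv ℝ F p with hf'
  have hsF : HasStrictFDerivAt F f' p := hF.contDiffAt.hasStrictFDerivAt (by simp)
  rw [Submodule.mem_orthogonal]
  intro u hu
  set u' : LinearMap.ker f'.toLinearMap := ⟨u, hu⟩ with hu'
  set γ : ℝ → EuclideanSpace ℝ (Fin n) :=
    fun t => hsF.implicitFunction F f' hrange (F p) (t • u') with hγ
  have hγ0 : γ 0 = p := by
    simp only [hγ, zero_smul]
    exact hsF.implicitFunction_apply_image hrange
  -- derivative of γ at 0
  have hsmul : HasDerivAt (fun t : ℝ => t • u') u' 0 := by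
    simpa using (hasDerivAt_id (0:ℝ)).smul_const u'
  have himp := (hsF.to_implicitFunction hrange).hasFDerivAt
  have hγ' : HasDerivAt γ u 0 := by
    have h0 : HasFDerivAt (hsF.implicitFunction F f' hrange (F p))
        (LinearMap.ker f'.toLinearMap).subtypeL ((0:ℝ) • u') := by simpa using himp
    have := h0.comp_hasDerivAt 0 hsmul
    exact this
  -- eventually in M
  have hmem : ∀ᶠ t in nhds (0:ℝ), γ t ∈ M := by
    have hten : Filter.Tendsto (fun t : ℝ => ((F p), t • u'))
        (nhds 0) (nhds (F p, (0 : LinearMap.ker f'.toLinearMap))) := by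
      refine Filter.Tendsto.prodMk_nhds tendsto_const_nhds ?_
      have : Filter.Tendsto (fun t : ℝ => t • u') (nhds 0) (nhds ((0:ℝ) • u')) :=
        (continuous_id.smul continuous_const).tendsto 0
      simpa using this
    have := hten.eventually (hsF.map_implicitFunction_eq hrange)
    refine this.mono fun t ht => ?_
    rw [hM]
    simpa [hγ, hFp] using ht
  -- local min of squared distance
  set h : ℝ → ℝ := fun t => inner ℝ (y - γ t) (y - γ t) with hh
  have hmin : IsLocalMin h 0 := by
    refine hmem.mono fun t ht => ?_
    have h1 : Metric.infDist y M ≤ ‖y - γ t‖ := by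
      rw [← dist_eq_norm]; exact Metric.infDist_le_dist_of_mem ht
    have h2 : ‖y - γ 0‖ ≤ ‖y - γ t‖ := by rw [hγ0, hd]; exact h1
    simp only [hh, real_inner_self_eq_norm_sq]
    exact pow_le_pow_left₀ (norm_nonneg _) h2 2
  have hder : HasDerivAt h (inner ℝ (y - γ 0) (-u) + inner ℝ (-u) (y - γ 0)) 0 := by
    have hsub : HasDerivAt (fun t => y - γ t) (-u) 0 := hγ'.const_sub y
    exact hsub.inner ℝ hsub
  have hzero := hmin.hasDerivAt_eq_zero hder
  rw [hγ0] at hzero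
  have hsymm : (inner ℝ (y - p) (-u) : ℝ) = inner ℝ (-u) (y - p) := real_inner_comm _ _
  have h4 : (inner ℝ (-u) (y - p) : ℝ) = 0 := by linarith
  have h5 : (inner ℝ u (y - p) : ℝ) = 0 := by
    rw [inner_neg_left] at h4; linarith
  exact h5

set_option maxHeartbeats 1000000 in
/-- Positive reach of a level set: let `M = F⁻¹(0)` for smooth `F : ℝⁿ → ℝᵏ` with
`DF` surjective on `M`, smallest singular value bounded below by `c₀ > 0` (encoded on
the row space `(ker DF)ᗮ`), and `‖D²F‖ ≤ C₂` on an open convex neighborhood `V ⊇ M`.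
Then every point within distance `c₀ / C₂` of `M` has a unique nearest point in `M`;
in particular `reach(M) ≥ c₀/C₂` and `M` admits a uniform tubular neighborhood. -/
theorem stmt_16 (n k : ℕ) (hkn : k < n)
    (F : EuclideanSpace ℝ (Fin n) → EuclideanSpace ℝ (Fin k))
    (hF : ContDiff ℝ (⊤ : ℕ∞) F)
    (M : Set (EuclideanSpace ℝ (Fin n))) (hM : M = F ⁻¹' {0}) (hMne : M.Nonempty)
    (hsurj : ∀ x ∈ M, Function.Surjective (fderiv ℝ F x))
    (c₀ C₂ : ℝ) (hc₀ : 0 < c₀) (hC₂ : 0 < C₂)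
    (hσ : ∀ x ∈ M, ∀ v ∈ (LinearMap.ker (fderiv ℝ F x).toLinearMap)ᗮ,
      c₀ * ‖v‖ ≤ ‖fderiv ℝ F x v‖)
    (V : Set (EuclideanSpace ℝ (Fin n))) (hV : IsOpen V) (hVconv : Convex ℝ V)
    (hMV : M ⊆ V)
    (hD2 : ∀ y ∈ V, ‖iteratedFDeriv ℝ 2 F y‖ ≤ C₂) :
    ∀ y : EuclideanSpace ℝ (Fin n), Metric.infDist y M < c₀ / C₂ →
      ∃! p, p ∈ M ∧ ‖y - p‖ = Metric.infDist y M := by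
  intro y hy
  have hMclosed : IsClosed M := by
    rw [hM]; exact isClosed_singleton.preimage hF.continuous
  obtain ⟨p, hpM, hpd⟩ := hMclosed.exists_infDist_eq_dist hMne y
  have hpd' : ‖y - p‖ = Metric.infDist y M := by rw [← dist_eq_norm]; exact hpd.symm
  refine ⟨p, ⟨hpM, hpd'⟩, ?_⟩
  rintro q ⟨hqM, hqd⟩
  by_contra hne
  -- setup
  set d := Metric.infDist y M with hdd
  have hd0 : 0 ≤ d := Metric.infDist_nonneg
  set f' := fderiv ℝ F p with hf'
  have hrange : LinearMap.range f'.toLinearMap = ⊤ := LinearMap.range_eq_top.2 (hsurj p hpM)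
  have horth : y - p ∈ (LinearMap.ker f'.toLinearMap)ᗮ := orth_aux hF hM hpM hrange hpd'
  set v := q - p with hv
  have hvne : v ≠ 0 := sub_ne_zero.2 hne
  have hvpos : (0:ℝ) < ‖v‖ ^ 2 := pow_pos (norm_pos_iff.mpr hvne) 2
  -- decomposition
  set K := LinearMap.ker f'.toLinearMap with hK
  set u : EuclideanSpace ℝ (Fin n) := (K.orthogonalProjectionOnto v : EuclideanSpace ℝ (Fin n))
    with hu
  set w := v - u with hw
  have hwmem : w ∈ Kᗮ := K.sub_starProjection_mem_orthogonal v
  have humem : u ∈ K := (K.orthogonalProjectionOnto v).2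
  -- Taylor estimate
  have hT : ‖F q - F p - f' v‖ ≤ C₂ / 2 * ‖v‖ ^ 2 :=
    taylor_aux hF hVconv hC₂.le hD2 (hMV hpM) (hMV hqM)
  have hFp : F p = 0 := by rw [hM] at hpM; simpa using hpM
  have hFq : F q = 0 := by rw [hM] at hqM; simpa using hqM
  have hfv : ‖f' v‖ ≤ C₂ / 2 * ‖v‖ ^ 2 := by
    have : ‖-(f' v)‖ ≤ C₂ / 2 * ‖v‖ ^ 2 := by simpa [hFp, hFq] using hT
    simpa using this
  have hfvw : f' v = f' w := by
    have : f' (v - w) = 0 := by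
      have : v - w ∈ K := by simpa [hw] using humem
      simpa [hK] using this
    have h2 : f' v - f' w = 0 := by rw [← map_sub]; exact this
    exact sub_eq_zero.1 h2
  have hwbound : c₀ * ‖w‖ ≤ C₂ / 2 * ‖v‖ ^ 2 := by
    calc c₀ * ‖w‖ ≤ ‖f' w‖ := hσ p hpM w hwmem
      _ = ‖f' v‖ := by rw [hfvw]
      _ ≤ C₂ / 2 * ‖v‖ ^ 2 := hfv
  -- geometry: 2⟪y-p, v⟫ = ‖v‖²
  have hgeom : ‖v‖ ^ 2 = 2 * (inner ℝ (y - p) v : ℝ) := by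
    have h1 : ‖y - q‖ ^ 2 = ‖y - p‖ ^ 2 := by rw [hqd, hpd']
    have h2 : y - q = (y - p) - v := by rw [hv]; abel
    rw [h2, norm_sub_sq_real] at h1
    linarith
  have hinner_u : (inner ℝ (y - p) u : ℝ) = 0 := by
    have := horth u humem
    rw [real_inner_comm] at this
    exact this
  have hinner : (inner ℝ (y - p) v : ℝ) = inner ℝ (y - p) w := by
    have : v = w + u := by rw [hw]; abel
    rw [this, inner_add_right, hinner_u, add_zero]
  have hCS : (inner ℝ (y - p) w : ℝ) ≤ ‖y - p‖ * ‖w‖ := real_inner_le_norm _ _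
  -- combine
  have h1 : ‖v‖ ^ 2 ≤ 2 * (d * ‖w‖) := by
    rw [hgeom, hinner]
    have hCS' := hCS
    rw [hpd'] at hCS'
    nlinarith
  have h6 : c₀ ≤ C₂ * d := by
    by_contra hlt
    push_neg at hlt
    have e1 : c₀ * ‖v‖ ^ 2 ≤ c₀ * (2 * (d * ‖w‖)) := mul_le_mul_of_nonneg_left h1 hc₀.le
    have e2 : d * (c₀ * ‖w‖) ≤ d * (C₂ / 2 * ‖v‖ ^ 2) := mul_le_mul_of_nonneg_left hwbound hd0
    have e3 : (C₂ * d) * ‖v‖ ^ 2 < c₀ * ‖v‖ ^ 2 := mul_lt_mul_of_pos_right hlt hvpos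
    linarith
  have h7 : c₀ / C₂ ≤ d := by
    rw [div_le_iff₀ hC₂]; linarith
  exact absurd hy (not_lt.2 h7)
end
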